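/- Let Λ = Z_p[[T]], let f, g ∈ Λ be such that 0 → Λ/(f) → X → Λ/(g) → 0 is an exact sequence of Λ-modules, and suppose X/TX is finite. Then |X/TX|/|X[T]| = |f(0)·g(0)|_p^{-1}. -/

import Mathlib

/-!
Write `Λ = ℤ_p⟦T⟧` and `M/T` for `M ⧸ T • M`. The functor `M ↦ M/T` is right exact, and the
snake lemma makes `A/T → X/T` injective as soon as `T` is a non-zero-divisor on the cokernel.
For `A = Λ/(a)` one has `A/T ≅ ℤ_p/(a(0))`, of order `|a(0)|_p⁻¹`, and `T` is regular on `A`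
when `a(0) ≠ 0`. Finiteness of `X/T` forces first `g(0) ≠ 0`, then `f(0) ≠ 0`; so `T`
is injective on `X`, and `0 → Λ/(f, T) → X/T → Λ/(g, T) → 0` is exact.
-/

open Function Pointwise PowerSeries

section ShortExact

theorem Nat.card_eq_mul_of_exact {R A M B : Type*} [Ring R] [AddCommGroup A] [Module R A]
    [AddCommGroup M] [Module R M] [AddCommGroup B] [Module R B] {f : A →ₗ[R] M}
    {g : M →ₗ[R] B} (hf : Injective f) (hfg : Exact f g) (hg : Surjective g) :
    Nat.card M = Nat.card A * Nat.card B := by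
  rw [(LinearMap.range f).card_eq_card_quotient_mul_card,
    Nat.card_congr (LinearEquiv.ofInjective f hf).toEquiv.symm,
    Nat.card_congr (hfg.linearEquivOfSurjective hg).toEquiv]

variable {R A M B : Type*} [CommRing R] [AddCommGroup A] [Module R A] [AddCommGroup M]
  [Module R M] [AddCommGroup B] [Module R B]

theorem LinearMap.range_lsmul_eq_smul_top (r : R) :
    LinearMap.range (LinearMap.lsmul R M r) = r • ⊤ := by
  rw [LinearMap.range_eq_map]; rfl

theorem QuotSMulTop.map_injective_of_isSMulRegular {f : A →ₗ[R] M} {g : M →ₗ[R] B}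
    (hf : Injective f) (hfg : Exact f g) {r : R} (hr : IsSMulRegular B r) :
    Injective (QuotSMulTop.map r f) := by
  have h0f : Exact (0 : Unit →ₗ[R] A) f := (LinearMap.exact_zero_iff_injective _ f).mpr hf
  have h := QuotSMulTop.map_first_exact_on_four_term_exact_of_isSMulRegular_last h0f hfg hr
  rwa [map_zero, LinearMap.exact_zero_iff_injective] at h

theorem QuotSMulTop.card_eq_mul_of_exact {f : A →ₗ[R] M} {g : M →ₗ[R] B} (hf : Injective f)
    (hfg : Exact f g) (hg : Surjective g) {r : R} (hr : IsSMulRegular B r) :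
    Nat.card (QuotSMulTop r M) = Nat.card (QuotSMulTop r A) * Nat.card (QuotSMulTop r B) :=
  Nat.card_eq_mul_of_exact (map_injective_of_isSMulRegular hf hfg hr) (map_exact r hfg hg)
    (map_surjective r hg)

end ShortExact

namespace PowerSeries

variable {R : Type*} [CommRing R]

theorem ker_constantCoeff : RingHom.ker (constantCoeff (R := R)) = Ideal.span {X} := by
  ext φ
  rw [RingHom.mem_ker, Ideal.mem_span_singleton, X_dvd_iff]

theorem span_singleton_sup_span_X_eq_ker (a : R⟦X⟧) :
    Ideal.span {a} ⊔ Ideal.span {X} =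
      RingHom.ker ((Ideal.Quotient.mk (Ideal.span {constantCoeff a})).comp constantCoeff) := by
  rw [← RingHom.comap_ker, Ideal.mk_ker, ← Set.image_singleton (f := constantCoeff),
    ← Ideal.map_span, Ideal.comap_map_of_surjective _ constantCoeff_surj,
    ← RingHom.ker_eq_comap_bot, ker_constantCoeff]

theorem X_smul_top_eq_map_span_X (a : R⟦X⟧) :
    (X : R⟦X⟧) • (⊤ : Submodule R⟦X⟧ (R⟦X⟧ ⧸ Ideal.span {a})) =
      Submodule.map (Ideal.span {a}).mkQ (Ideal.span {X}) := by
  rw [← Ideal.mul_top (Ideal.span {X}), ← smul_eq_mul, Submodule.ideal_span_singleton_smul,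
    Submodule.map_pointwise_smul, Submodule.map_top, Submodule.range_mkQ]

noncomputable def quotSMulTopXQuotientEquiv (a : R⟦X⟧) :
    QuotSMulTop (X : R⟦X⟧) (R⟦X⟧ ⧸ Ideal.span {a}) ≃ R ⧸ Ideal.span {constantCoeff a} :=
  let e₁ : QuotSMulTop (X : R⟦X⟧) (R⟦X⟧ ⧸ Ideal.span {a}) ≃ₗ[R⟦X⟧]
      R⟦X⟧ ⧸ (Ideal.span {a} ⊔ Ideal.span {X}) :=
    (Submodule.quotEquivOfEq _ _ (X_smul_top_eq_map_span_X a)).trans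
      (Submodule.quotientQuotientEquivQuotientSup _ _)
  let e₂ : R⟦X⟧ ⧸ (Ideal.span {a} ⊔ Ideal.span {X}) ≃+* R ⧸ Ideal.span {constantCoeff a} :=
    (Ideal.quotEquivOfEq (span_singleton_sup_span_X_eq_ker a)).trans
      (RingHom.quotientKerEquivOfSurjective (Ideal.Quotient.mk_surjective.comp constantCoeff_surj))
  e₁.toEquiv.trans e₂.toEquiv

theorem isSMulRegular_X_quotient [IsDomain R] {a : R⟦X⟧} (ha : constantCoeff a ≠ 0) :
    IsSMulRegular (R⟦X⟧ ⧸ Ideal.span {a}) (X : R⟦X⟧) := by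
  refine (isSMulRegular_on_quot_iff_lsmul_comap_le _ _).mpr fun h hh => ?_
  obtain ⟨k, hk⟩ := Ideal.mem_span_singleton.mp (Submodule.mem_comap.mp hh)
  rw [LinearMap.lsmul_apply, smul_eq_mul] at hk
  have hXk : X ∣ k := (X_prime.dvd_or_dvd ⟨h, hk.symm⟩).resolve_left (by rwa [X_dvd_iff])
  obtain ⟨m, rfl⟩ := hXk
  exact Ideal.mem_span_singleton.mpr ⟨m, mul_left_cancel₀ X_ne_zero (by rw [hk]; ring)⟩

end PowerSeries

namespace PadicInt

variable {p : ℕ} [Fact p.Prime]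

-- For `a = 0` both sides are junk zeros: `ℤ_[p]` is infinite and `‖0‖⁻¹ = 0`.
theorem natCard_quotient_span_singleton (a : ℤ_[p]) :
    (Nat.card (ℤ_[p] ⧸ Ideal.span {a}) : ℝ) = ‖a‖⁻¹ := by
  rcases eq_or_ne a 0 with rfl | ha
  · have : Infinite (ℤ_[p] ⧸ Ideal.span {(0 : ℤ_[p])}) := by
      rw [Ideal.span_singleton_eq_bot.mpr rfl]
      exact Infinite.of_injective _ (RingEquiv.quotientBot ℤ_[p]).symm.injective
    simp
  have hspan : Ideal.span {a} = RingHom.ker (toZModPow (p := p) a.valuation) := by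
    rw [ker_toZModPow, Ideal.span_singleton_eq_span_singleton]
    exact Associated.symm ⟨unitCoeff ha, by rw [mul_comm, ← unitCoeff_spec ha]⟩
  rw [Nat.card_congr ((Ideal.quotEquivOfEq hspan).trans
      (RingHom.quotientKerEquivOfSurjective (ZMod.ringHom_surjective _))).toEquiv,
    Nat.card_zmod, norm_eq_zpow_neg_valuation ha]
  simp

theorem natCard_quotSMulTop_X_quotient (a : ℤ_[p]⟦X⟧) :
    (Nat.card (QuotSMulTop (X : ℤ_[p]⟦X⟧) (ℤ_[p]⟦X⟧ ⧸ Ideal.span {a})) : ℝ) =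
      ‖constantCoeff a‖⁻¹ := by
  rw [Nat.card_congr (quotSMulTopXQuotientEquiv a), natCard_quotient_span_singleton]

theorem constantCoeff_ne_zero_of_finite {a : ℤ_[p]⟦X⟧}
    (h : Finite (QuotSMulTop (X : ℤ_[p]⟦X⟧) (ℤ_[p]⟦X⟧ ⧸ Ideal.span {a}))) :
    constantCoeff a ≠ 0 := by
  intro ha
  have hcard := natCard_quotSMulTop_X_quotient a
  rw [ha, norm_zero, inv_zero, Nat.cast_eq_zero] at hcard
  exact Nat.card_pos.ne' hcard

end PadicInt

/-- Let `Λ = ℤ_p[[T]]` and let `f, g ∈ Λ` be such that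
`0 → Λ/(f) → X → Λ/(g) → 0` is an exact sequence of `Λ`-modules, and suppose `X/TX`
is finite.  Then `|X/TX| / |X[T]| = |f(0)·g(0)|_p⁻¹`. -/
theorem stmt_5 {p : ℕ} [Fact p.Prime] {X : Type*} [AddCommGroup X]
    [Module (PowerSeries ℤ_[p]) X]
    (f g : PowerSeries ℤ_[p])
    (ι : (PowerSeries ℤ_[p] ⧸ Ideal.span {f}) →ₗ[PowerSeries ℤ_[p]] X)
    (π : X →ₗ[PowerSeries ℤ_[p]] (PowerSeries ℤ_[p] ⧸ Ideal.span {g}))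
    (hι : Function.Injective ι) (hπ : Function.Surjective π)
    (hexact : LinearMap.range ι = LinearMap.ker π)
    (hfin : Finite (X ⧸ LinearMap.range
      (LinearMap.lsmul (PowerSeries ℤ_[p]) X (PowerSeries.X)))) :
    (Nat.card (X ⧸ LinearMap.range
        (LinearMap.lsmul (PowerSeries ℤ_[p]) X (PowerSeries.X))) : ℝ) /
      (Nat.card (LinearMap.ker
        (LinearMap.lsmul (PowerSeries ℤ_[p]) X (PowerSeries.X))) : ℝ) =
    ‖PowerSeries.constantCoeff (R := ℤ_[p]) f * PowerSeries.constantCoeff (R := ℤ_[p]) g‖⁻¹ := by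
  have hιπ : Function.Exact ι π := LinearMap.exact_iff.mpr hexact.symm
  rw [LinearMap.range_lsmul_eq_smul_top] at hfin ⊢
  have hg : constantCoeff g ≠ 0 := PadicInt.constantCoeff_ne_zero_of_finite
    (Finite.of_surjective _ (QuotSMulTop.map_surjective _ hπ))
  have hg_reg := isSMulRegular_X_quotient hg
  have hf : constantCoeff f ≠ 0 := PadicInt.constantCoeff_ne_zero_of_finite
    (Finite.of_injective _ (QuotSMulTop.map_injective_of_isSMulRegular hι hιπ hg_reg))
  have hker : LinearMap.ker (LinearMap.lsmul _ X PowerSeries.X) = ⊥ :=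
    (isSMulRegular_iff_ker_lsmul_eq_bot X _).mp
      (isSMulRegular_of_range_eq_ker hι hexact (isSMulRegular_X_quotient hf) hg_reg)
  rw [hker, QuotSMulTop.card_eq_mul_of_exact hι hιπ hπ hg_reg, Nat.cast_mul,
    PadicInt.natCard_quotSMulTop_X_quotient, PadicInt.natCard_quotSMulTop_X_quotient,
    Nat.card_unique (α := (⊥ : Submodule ℤ_[p]⟦X⟧ X)), Nat.cast_one, div_one, norm_mul, mul_inv]
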